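/- Let f be a probability density on ℝ with f(x) ≤ M ψ(x) for all x and some M > 0, and let p ∈ (0,1). Then: (1) for every positive integer i and every σ ∈ (0, 1 − p^{1/i}), (K_σ^i f)(x) ≤ M (2/√3)^i ψ(px) for all x ∈ ℝ; (2) for every positive integer k and every σ ∈ (0, 1 − p^{1/k}), max(f_k(x), g_k(x), h_k(x)/2) ≤ 2M (4/√3)^k ψ(px) for all x ∈ ℝ. -/

import Mathlib

/-!
The Gaussian family is closed under convolution:
`K_σ ψ(·/s) = s / √(s² + σ²) · ψ(·/√(s² + σ²))`. Hence an envelope `|F| ≤ C ψ(·/s)` passes to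
`|K_σ F| ≤ C ψ(·/√(s² + σ²))`, and by induction `|K_σ^i f| ≤ M ψ(·/√(1 + iσ²))` and, by the
triangle inequality in `f_{j+1} = f - K_σ f_j + f_j`, `|f_k| ≤ (2^{k+1} - 1) M ψ(·/√(1 + kσ²))`.
The condition `σ < 1 - p^{1/k}` gives `p √(1 + kσ²) ≤ 1`, so these envelopes lie below `ψ(p·)`.
Finally `f/2 ≤ g_k ≤ max(f_k, f/2)`, so `∫ g_k ≥ 1/2` and `h_k/2 ≤ g_k` (if `g_k` is not
integrable, `∫ g_k = 0` and `h_k = 0`).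
-/

open MeasureTheory

/-- The Gaussian kernel `ψ(x) = π^{-1/2} exp(-x²)`. -/
noncomputable def gaussK (x : ℝ) : ℝ := (Real.sqrt Real.pi)⁻¹ * Real.exp (-x ^ 2)

/-- The scaled Gaussian kernel `ψ_σ(x) = σ⁻¹ ψ(x/σ)`. -/
noncomputable def gaussKs (σ x : ℝ) : ℝ := σ⁻¹ * gaussK (x / σ)

/-- Convolution with `ψ_σ` : `K_σ f`. -/
noncomputable def convK (σ : ℝ) (f : ℝ → ℝ) : ℝ → ℝ := fun x => ∫ u, f u * gaussKs σ (x - u)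

/-- `i`-fold application of `K_σ`, with `K_σ^0 f = f`. -/
noncomputable def convKiter (σ : ℝ) (f : ℝ → ℝ) : ℕ → ℝ → ℝ
  | 0 => f
  | i + 1 => convK σ (convKiter σ f i)

/-- The iterates `f_0 = f`, `f_{j+1} = f - (K_σ f_j - f_j)`. -/
noncomputable def iterF (σ : ℝ) (f : ℝ → ℝ) : ℕ → ℝ → ℝ
  | 0 => f
  | j + 1 => fun x => f x - (convK σ (iterF σ f j) x - iterF σ f j x)

/-- `J_{σ,k} = {x : f_k(x) > f(x)/2}`. -/
def Jset (σ : ℝ) (f : ℝ → ℝ) (k : ℕ) : Set ℝ := {x | f x / 2 < iterF σ f k x}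

-- `g_k = f_k 1_{J_{σ,k}} + (f/2) 1_{J_{σ,k}^c}`
open Classical in
noncomputable def gFun (σ : ℝ) (f : ℝ → ℝ) (k : ℕ) : ℝ → ℝ :=
  fun x => if x ∈ Jset σ f k then iterF σ f k x else f x / 2

/-- `h_k = g_k / ∫ g_k`. -/
noncomputable def hFun (σ : ℝ) (f : ℝ → ℝ) (k : ℕ) : ℝ → ℝ :=
  fun x => gFun σ f k x / ∫ u, gFun σ f k u

open Real

lemma gaussK_pos (x : ℝ) : 0 < gaussK x := by unfold gaussK; positivity

lemma gaussKs_nonneg {σ : ℝ} (hσ : 0 < σ) (x : ℝ) : 0 ≤ gaussKs σ x :=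
  mul_nonneg (inv_nonneg.mpr hσ.le) (gaussK_pos _).le

lemma gaussK_le_gaussK_of_abs_le {a b : ℝ} (h : |a| ≤ |b|) : gaussK b ≤ gaussK a := by
  unfold gaussK
  exact mul_le_mul_of_nonneg_left (exp_le_exp.mpr (neg_le_neg (sq_le_sq.mpr h))) (by positivity)

lemma gaussK_div_le_gaussK_mul {p s : ℝ} (hp : 0 ≤ p) (hs : 0 < s) (hps : p * s ≤ 1) (x : ℝ) :
    gaussK (x / s) ≤ gaussK (p * x) := by
  refine gaussK_le_gaussK_of_abs_le ?_
  rw [abs_mul, abs_div, abs_of_nonneg hp, abs_of_pos hs, le_div_iff₀ hs]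
  nlinarith [abs_nonneg x]

lemma gaussK_div_le_gaussK_div {a b : ℝ} (ha : 0 < a) (hab : a ≤ b) (x : ℝ) :
    gaussK (x / a) ≤ gaussK (x / b) := by
  rw [div_eq_inv_mul x b]
  exact gaussK_div_le_gaussK_mul (inv_nonneg.mpr (ha.trans_le hab).le) ha
    ((inv_mul_le_one₀ (ha.trans_le hab)).mpr hab) x

lemma gaussK_div_mul_gaussKs {s σ : ℝ} (hs : 0 < s) (hσ : 0 < σ) (x u : ℝ) :
    gaussK (u / s) * gaussKs σ (x - u) =
      (π * σ)⁻¹ * exp (-(x ^ 2 / (s ^ 2 + σ ^ 2))) *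
        exp (-((s ^ 2 + σ ^ 2) / (s ^ 2 * σ ^ 2)) * (u - x * s ^ 2 / (s ^ 2 + σ ^ 2)) ^ 2) := by
  have hπ : √π * √π = π := mul_self_sqrt pi_pos.le
  unfold gaussKs gaussK
  calc _ = (√π * √π * σ)⁻¹ * exp (-(u / s) ^ 2 + -((x - u) / σ) ^ 2) := by
          rw [exp_add]; field_simp
    _ = _ := by
          rw [hπ, mul_assoc, ← exp_add]
          congr 2
          field_simp
          ring

lemma integrable_gaussK_div_mul_gaussKs {s σ : ℝ} (hs : 0 < s) (hσ : 0 < σ) (x : ℝ) :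
    Integrable fun u => gaussK (u / s) * gaussKs σ (x - u) := by
  simp_rw [gaussK_div_mul_gaussKs hs hσ]
  exact ((integrable_exp_neg_mul_sq (by positivity)).comp_sub_right _).const_mul _

lemma convK_gaussK_div {s σ : ℝ} (hs : 0 < s) (hσ : 0 < σ) (x : ℝ) :
    convK σ (fun u => gaussK (u / s)) x =
      s / √(s ^ 2 + σ ^ 2) * gaussK (x / √(s ^ 2 + σ ^ 2)) := by
  have hS : 0 < s ^ 2 + σ ^ 2 := by positivity
  simp_rw [convK, gaussK_div_mul_gaussKs hs hσ, integral_const_mul,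
    integral_sub_right_eq_self (fun u => exp (-((s ^ 2 + σ ^ 2) / (s ^ 2 * σ ^ 2)) * u ^ 2)),
    integral_gaussian]
  rw [gaussK, div_pow, sq_sqrt hS.le, div_div_eq_mul_div, sqrt_div' _ hS.le, sqrt_mul pi_pos.le,
    ← mul_pow, sqrt_sq (by positivity)]
  field_simp
  exact sq_sqrt pi_pos.le

lemma abs_convK_le_convK {σ x : ℝ} {F G : ℝ → ℝ} (hσ : 0 < σ)
    (hG : Integrable fun u => G u * gaussKs σ (x - u)) (hFG : ∀ u, |F u| ≤ G u) :
    |convK σ F x| ≤ convK σ G x := by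
  refine (norm_integral_le_integral_norm _).trans (integral_mono_of_nonneg
    (Filter.Eventually.of_forall fun u => (norm_nonneg (F u * gaussKs σ (x - u)) :)) hG
    (Filter.Eventually.of_forall fun u => ?_))
  dsimp only
  rw [norm_mul, Real.norm_eq_abs, Real.norm_eq_abs, abs_of_nonneg (gaussKs_nonneg hσ _)]
  exact mul_le_mul_of_nonneg_right (hFG u) (gaussKs_nonneg hσ _)

/-- With `t = p^{1/k}`: Bernoulli gives `1 + kσ² ≤ (1 + σ²)^k`, and
`t²(1 + σ²) ≤ t²(1 + (1 - t)²) ≤ 1` since `1 - t²(1 + (1 - t)²) = (1 - t)(1 + t - t² + t³)`. -/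
lemma mul_sqrt_one_add_nat_mul_sq_le_one {p σ : ℝ} {k : ℕ} (hp : 0 ≤ p) (hk : k ≠ 0) (hσ : 0 < σ)
    (hσp : σ < 1 - p ^ (k : ℝ)⁻¹) : p * √(1 + k * σ ^ 2) ≤ 1 := by
  set t := p ^ (k : ℝ)⁻¹
  have ht : 0 ≤ t := Real.rpow_nonneg hp _
  have htσ : t ^ 2 * (1 + σ ^ 2) ≤ 1 := by
    have : σ ^ 2 ≤ (1 - t) ^ 2 := pow_le_pow_left₀ hσ.le hσp.le 2
    have hfactor : 0 ≤ (1 - t) * (1 + t - t ^ 2 + t ^ 3) :=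
      mul_nonneg (by linarith) (by nlinarith [mul_nonneg (mul_nonneg ht ht) ht])
    nlinarith
  have hpt : p = t ^ k := (Real.rpow_inv_natCast_pow hp hk).symm
  rw [← pow_le_one_iff_of_nonneg (by positivity) two_ne_zero, mul_pow, sq_sqrt (by positivity)]
  calc p ^ 2 * (1 + k * σ ^ 2) ≤ (t ^ k) ^ 2 * (1 + σ ^ 2) ^ k := by
        rw [hpt]
        gcongr
        exact one_add_mul_le_pow (by nlinarith) k
    _ = (t ^ 2 * (1 + σ ^ 2)) ^ k := by rw [mul_pow, ← pow_mul, ← pow_mul, mul_comm k 2]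
    _ ≤ 1 := pow_le_one₀ (by positivity) htσ

lemma one_le_sqrt_one_add_nat_mul_sq (σ : ℝ) (k : ℕ) : 1 ≤ √(1 + k * σ ^ 2) :=
  Real.one_le_sqrt.mpr (le_add_of_nonneg_right (by positivity))

lemma one_le_two_div_sqrt_three : (1 : ℝ) ≤ 2 / √3 :=
  (one_le_div (by positivity)).mpr (Real.sqrt_le_iff.mpr ⟨by norm_num, by norm_num⟩)

lemma two_pow_succ_sub_one_le (k : ℕ) : (2 : ℝ) ^ (k + 1) - 1 ≤ 2 * (4 / √3) ^ k := by
  rw [show (4 : ℝ) / √3 = 2 * (2 / √3) by ring, mul_pow, pow_succ]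
  nlinarith [one_le_pow₀ one_le_two_div_sqrt_three (n := k), pow_pos (by norm_num : (0 : ℝ) < 2) k]

def GaussDominated (C s : ℝ) (F : ℝ → ℝ) : Prop := ∀ u, |F u| ≤ C * gaussK (u / s)

namespace GaussDominated

variable {C D s : ℝ} {F G : ℝ → ℝ}

lemma nonneg (hF : GaussDominated C s F) : 0 ≤ C :=
  nonneg_of_mul_nonneg_left ((abs_nonneg _).trans (hF 0)) (gaussK_pos _)

lemma le_mul_gaussK_mul (hF : GaussDominated C s F) {p : ℝ} (hp : 0 ≤ p) (hs : 0 < s)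
    (hps : p * s ≤ 1) (x : ℝ) : F x ≤ C * gaussK (p * x) :=
  (le_abs_self _).trans <| (hF x).trans <|
    mul_le_mul_of_nonneg_left (gaussK_div_le_gaussK_mul hp hs hps x) hF.nonneg

lemma le_mul_gaussK_mul_of_lt {σ p : ℝ} {k : ℕ} (hF : GaussDominated C √(1 + k * σ ^ 2) F)
    (hp : 0 ≤ p) (hk : k ≠ 0) (hσ : 0 < σ) (hσp : σ < 1 - p ^ (k : ℝ)⁻¹) (x : ℝ) :
    F x ≤ C * gaussK (p * x) :=
  hF.le_mul_gaussK_mul hp (by positivity) (mul_sqrt_one_add_nat_mul_sq_le_one hp hk hσ hσp) x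

lemma mono {t : ℝ} (hF : GaussDominated C s F) (hs : 0 < s) (hst : s ≤ t) :
    GaussDominated C t F := fun u =>
  (hF u).trans (mul_le_mul_of_nonneg_left (gaussK_div_le_gaussK_div hs hst u) hF.nonneg)

lemma sub (hF : GaussDominated C s F) (hG : GaussDominated D s G) :
    GaussDominated (C + D) s fun x => F x - G x := fun u =>
  calc |F u - G u| ≤ |F u| + |G u| := abs_sub _ _
    _ ≤ C * gaussK (u / s) + D * gaussK (u / s) := add_le_add (hF u) (hG u)
    _ = (C + D) * gaussK (u / s) := by ring

lemma convK (hF : GaussDominated C s F) {σ : ℝ} (hs : 0 < s) (hσ : 0 < σ) :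
    GaussDominated C √(s ^ 2 + σ ^ 2) (convK σ F) := fun x => by
  have hint := (integrable_gaussK_div_mul_gaussKs hs hσ x).const_mul C
  simp_rw [← mul_assoc] at hint
  calc |_root_.convK σ F x| ≤ _root_.convK σ (fun u => C * gaussK (u / s)) x :=
        abs_convK_le_convK hσ hint hF
    _ = C * (s / √(s ^ 2 + σ ^ 2) * gaussK (x / √(s ^ 2 + σ ^ 2))) := by
        rw [← convK_gaussK_div hs hσ, _root_.convK, _root_.convK, ← integral_const_mul]
        simp_rw [mul_assoc]
    _ ≤ C * gaussK (x / √(s ^ 2 + σ ^ 2)) := by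
        have hS : s ≤ √(s ^ 2 + σ ^ 2) := Real.le_sqrt_of_sq_le (by nlinarith)
        exact mul_le_mul_of_nonneg_left (mul_le_of_le_one_left (gaussK_pos _).le
          ((div_le_one (hs.trans_le hS)).mpr hS)) hF.nonneg

end GaussDominated

lemma sqrt_one_add_nat_mul_sq_succ (σ : ℝ) (i : ℕ) :
    √(√(1 + i * σ ^ 2) ^ 2 + σ ^ 2) = √(1 + ((i + 1 : ℕ) : ℝ) * σ ^ 2) := by
  rw [sq_sqrt (by positivity)]
  push_cast
  ring_nf

lemma gaussDominated_convKiter {M σ : ℝ} {f : ℝ → ℝ} (hf : GaussDominated M 1 f) (hσ : 0 < σ) :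
    ∀ i : ℕ, GaussDominated M √(1 + i * σ ^ 2) (convKiter σ f i)
  | 0 => by simpa [convKiter] using hf
  | i + 1 => by
      rw [← sqrt_one_add_nat_mul_sq_succ]
      exact (gaussDominated_convKiter hf hσ i).convK (by positivity) hσ

lemma gaussDominated_iterF {M σ : ℝ} {f : ℝ → ℝ} (hf : GaussDominated M 1 f) (hσ : 0 < σ) :
    ∀ j : ℕ, GaussDominated ((2 ^ (j + 1) - 1) * M) √(1 + j * σ ^ 2) (iterF σ f j)
  | 0 => by norm_num [iterF]; exact hf
  | j + 1 => by
      have hj := gaussDominated_iterF hf hσ j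
      have hs : 0 < √(1 + j * σ ^ 2) := by positivity
      have hst : √(1 + j * σ ^ 2) ≤ √(1 + ((j + 1 : ℕ) : ℝ) * σ ^ 2) := by
        gcongr; exact_mod_cast j.le_succ
      have hK := hj.convK hs hσ
      rw [sqrt_one_add_nat_mul_sq_succ] at hK
      have hf' := hf.mono one_pos (one_le_sqrt_one_add_nat_mul_sq σ (j + 1))
      convert hf'.sub (hK.sub (hj.mono hs hst)) using 1
      · ring
      · rfl

lemma half_le_gFun (σ : ℝ) (f : ℝ → ℝ) (k : ℕ) (x : ℝ) : f x / 2 ≤ gFun σ f k x := by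
  unfold gFun
  split_ifs with hx
  exacts [le_of_lt hx, le_rfl]

lemma hFun_div_two_le_gFun {σ : ℝ} {f : ℝ → ℝ} (hf0 : ∀ x, 0 ≤ f x) (hf1 : ∫ x, f x = 1) (k : ℕ)
    (x : ℝ) : hFun σ f k x / 2 ≤ gFun σ f k x := by
  have hg : 0 ≤ gFun σ f k x := (div_nonneg (hf0 x) two_pos.le).trans (half_le_gFun σ f k x)
  by_cases hint : Integrable (gFun σ f k)
  · have : 1 / 2 ≤ ∫ u, gFun σ f k u := by
      calc (1 : ℝ) / 2 = ∫ u, f u / 2 := by rw [integral_div, hf1]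
        _ ≤ ∫ u, gFun σ f k u := integral_mono_of_nonneg
            (Filter.Eventually.of_forall fun u => div_nonneg (hf0 u) two_pos.le) hint
            (Filter.Eventually.of_forall (half_le_gFun σ f k))
    rw [hFun, div_div]
    exact div_le_self hg (by linarith)
  · rw [hFun, integral_undef hint, div_zero, zero_div]
    exact hg

lemma max_iterF_gFun_hFun_le {σ B x : ℝ} {f : ℝ → ℝ} (hf0 : ∀ x, 0 ≤ f x) (hf1 : ∫ x, f x = 1)
    {k : ℕ} (hk : iterF σ f k x ≤ B) (hf : f x / 2 ≤ B) :
    max (iterF σ f k x) (max (gFun σ f k x) (hFun σ f k x / 2)) ≤ B := by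
  have hg : gFun σ f k x ≤ B := by
    unfold gFun
    split_ifs
    exacts [hk, hf]
  exact max_le hk (max_le hg ((hFun_div_two_le_gFun hf0 hf1 k x).trans hg))

theorem stmt17_general (f : ℝ → ℝ) (hf0 : ∀ x, 0 ≤ f x)
    (hf1 : (∫ x, f x) = 1) (M : ℝ) (hfM : ∀ x, f x ≤ M * gaussK x)
    (p : ℝ) (hp : 0 < p) :
    (∀ i : ℕ, 1 ≤ i → ∀ σ : ℝ, 0 < σ → σ < 1 - p ^ ((i : ℝ)⁻¹) → ∀ x : ℝ,
      convKiter σ f i x ≤ M * (2 / Real.sqrt 3) ^ i * gaussK (p * x)) ∧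
    (∀ k : ℕ, 1 ≤ k → ∀ σ : ℝ, 0 < σ → σ < 1 - p ^ ((k : ℝ)⁻¹) → ∀ x : ℝ,
      max (iterF σ f k x) (max (gFun σ f k x) (hFun σ f k x / 2)) ≤
        2 * M * (4 / Real.sqrt 3) ^ k * gaussK (p * x)) := by
  have hf : GaussDominated M 1 f := fun u => by
    simpa [abs_of_nonneg (hf0 u)] using hfM u
  refine ⟨fun i hi σ hσ hσp x => ?_, fun k hk σ hσ hσp x => ?_⟩
  · have hKf := (gaussDominated_convKiter hf hσ i).le_mul_gaussK_mul_of_lt hp.le (by omega) hσ hσp x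
    have hc := one_le_pow₀ one_le_two_div_sqrt_three (n := i)
    linarith [mul_le_mul_of_nonneg_right hc (mul_nonneg hf.nonneg (gaussK_pos (p * x)).le)]
  · have hfk := (gaussDominated_iterF hf hσ k).le_mul_gaussK_mul_of_lt hp.le (by omega) hσ hσp x
    have hfx := (hf.mono one_pos (one_le_sqrt_one_add_nat_mul_sq σ k)).le_mul_gaussK_mul_of_lt
      hp.le (by omega) hσ hσp x
    have hψ : 0 ≤ M * gaussK (p * x) := mul_nonneg hf.nonneg (gaussK_pos _).le
    have hc := mul_le_mul_of_nonneg_right (two_pow_succ_sub_one_le k) hψ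
    have h1 : M * gaussK (p * x) ≤ (2 ^ (k + 1) - 1) * (M * gaussK (p * x)) :=
      le_mul_of_one_le_left hψ (by
        linarith [one_le_pow₀ (by norm_num : (1 : ℝ) ≤ 2) (n := k), pow_succ (2 : ℝ) k])
    apply max_iterF_gFun_hFun_le hf0 hf1 <;> linarith [hf0 x]

/-- Lemma 14: Gaussian tail control of `K_σ^i f`, `f_k`, `g_k`, `h_k/2`:
`K_σ^i f ≤ M (2/√3)^i ψ(p·)` for `σ < 1 − p^{1/i}`, and
`max(f_k, g_k, h_k/2) ≤ 2M (4/√3)^k ψ(p·)` for `σ < 1 − p^{1/k}`. -/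
theorem stmt17 (f : ℝ → ℝ) (hf0 : ∀ x, 0 ≤ f x) (hfi : Integrable f)
    (hf1 : (∫ x, f x) = 1) (M : ℝ) (hM : 0 < M) (hfM : ∀ x, f x ≤ M * gaussK x)
    (p : ℝ) (hp : 0 < p) (hp1 : p < 1) :
    (∀ i : ℕ, 1 ≤ i → ∀ σ : ℝ, 0 < σ → σ < 1 - p ^ ((i : ℝ)⁻¹) → ∀ x : ℝ,
      convKiter σ f i x ≤ M * (2 / Real.sqrt 3) ^ i * gaussK (p * x)) ∧
    (∀ k : ℕ, 1 ≤ k → ∀ σ : ℝ, 0 < σ → σ < 1 - p ^ ((k : ℝ)⁻¹) → ∀ x : ℝ,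
      max (iterF σ f k x) (max (gFun σ f k x) (hFun σ f k x / 2)) ≤
        2 * M * (4 / Real.sqrt 3) ^ k * gaussK (p * x)) :=
  stmt17_general f hf0 hf1 M hfM p hp
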